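/- Let F be an algebraically closed field of characteristic 0, V a 2-dimensional F-vector space with a fixed nonzero alternating bilinear form ⟨·|·⟩, and for u, v ∈ V define s_{u,v} ∈ End(V) by s_{u,v}(w) = ½(⟨w|u⟩v + ⟨w|v⟩u); each s_{u,v} has trace zero. If f : V × V → 𝔰𝔩(V) is a bilinear map that is SL(V)-equivariant, i.e. f(g u, g v) = g ∘ f(u, v) ∘ g⁻¹ for all g ∈ SL(V) and u, v ∈ V, then there exists λ ∈ F with f(u, v) = λ·s_{u,v} for all u, v ∈ V. -/

import Mathlib

/-!
Choose a basis `e₀, e₁` with `⟨e₀|e₁⟩ = 1` and write `a i j k l` for the `e_l`-coordinate of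
`f(e_i, e_j)(e_k)`. Equivariance under the torus element `e₀ ↦ 2e₀, e₁ ↦ e₁/2` kills every
coordinate whose weights (`1` for `e₀`, `-1` for `e₁`) do not balance, `w_i + w_j + w_k = w_l`.
The trace condition and equivariance under the shear `e₁ ↦ e₀ + e₁` then express the surviving
coordinates through the single scalar `a 0 1 0 0`, and they are exactly those of `2 a 0 1 0 0 • s`.
That `s_{u,v}` is trace-free holds for any alternating form, since `tr(w ↦ ⟨w|u⟩v) = ⟨v|u⟩`.
-/

/-- The endomorphism `s_{u,v} : w ↦ ½(⟨w|u⟩v + ⟨w|v⟩u)` attached to a bilinear form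
`ω = ⟨·|·⟩` on `V` and vectors `u, v ∈ V`. -/
noncomputable def sMap {F V : Type*} [Field F] [AddCommGroup V] [Module F V]
    (ω : V →ₗ[F] V →ₗ[F] F) (u v : V) : Module.End F V :=
  (2⁻¹ : F) • ((ω.flip u).smulRight v + (ω.flip v).smulRight u)

open Module LinearMap

section Form

variable {F V : Type*} [Field F] [AddCommGroup V] [Module F V] {ω : V →ₗ[F] V →ₗ[F] F}

@[simp]
lemma sMap_apply (ω : V →ₗ[F] V →ₗ[F] F) (u v w : V) :
    sMap ω u v w = (2⁻¹ : F) • (ω w u • v + ω w v • u) := by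
  simp [sMap]

lemma trace_sMap [FiniteDimensional F V] (hω : ω.IsAlt) (u v : V) :
    trace F V (sMap ω u v) = 0 := by
  rw [sMap, map_smul, map_add, trace_smulRight, trace_smulRight, flip_apply, flip_apply,
    ← hω.neg, neg_add_cancel, smul_zero]

noncomputable def sMapBilin (ω : V →ₗ[F] V →ₗ[F] F) : V →ₗ[F] V →ₗ[F] End F V :=
  mk₂ F (sMap ω)
    (fun _ _ _ => by ext; simp; module) (fun _ _ _ => by ext; simp; module)
    (fun _ _ _ => by ext; simp; module) (fun _ _ _ => by ext; simp; module)

@[simp]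
lemma sMapBilin_apply (u v : V) : sMapBilin ω u v = sMap ω u v := rfl

lemma LinearMap.IsAlt.exists_basis_apply_eq_one (hω : ω.IsAlt) (hdim : finrank F V = 2)
    (hω₀ : ω ≠ 0) : ∃ b : Basis (Fin 2) F V, ω (b 0) (b 1) = 1 := by
  obtain ⟨u, v, huv⟩ : ∃ u v, ω u v ≠ 0 := by
    by_contra! h
    exact hω₀ (ext₂ h)
  have hind : LinearIndependent F ![u, (ω u v)⁻¹ • v] := by
    refine LinearIndependent.pair_iff.mpr fun s t hst => ?_
    have h₁ := congr(ω $hst v)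
    have h₂ := congr(ω u $hst)
    simp [hω.self_eq_zero, huv] at h₁ h₂
    exact ⟨h₁, h₂⟩
  refine ⟨basisOfLinearIndependentOfCardEqFinrank hind (by simp [hdim]), ?_⟩
  simp [coe_basisOfLinearIndependentOfCardEqFinrank, huv]

lemma apply_apply_apply_of_det_eq_one [FiniteDimensional F V]
    {f : V →ₗ[F] V →ₗ[F] End F V}
    (hf : ∀ g : V ≃ₗ[F] V, LinearMap.det (g : V →ₗ[F] V) = 1 →
      ∀ u v : V, f (g u) (g v) = g.toLinearMap ∘ₗ f u v ∘ₗ g.symm.toLinearMap)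
    {T : End F V} (hT : LinearMap.det T = 1) (u v w : V) :
    f (T u) (T v) (T w) = T (f u v w) := by
  have hT' : IsUnit (LinearMap.det T) := hT ▸ isUnit_one
  have := congr($(hf (equivOfIsUnitDet hT') (by simpa using hT) u v) (equivOfIsUnitDet hT' w))
  rw [comp_apply, comp_apply, LinearEquiv.coe_coe, LinearEquiv.coe_coe,
    LinearEquiv.symm_apply_apply] at this
  simpa only [equivOfIsUnitDet_apply] using this

end Form

section Basis

variable {F V : Type*} [Field F] [AddCommGroup V] [Module F V]

lemma Module.Basis.repr_eq_zero_of_apply_eq_smul {ι : Type*} [Fintype ι] (b : Basis ι F V)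
    {T : End F V} {t : ι → F} (hT : ∀ i, T (b i) = t i • b i) {x : V} {μ : F}
    (hx : T x = μ • x) {i : ι} (hi : t i ≠ μ) : b.repr x i = 0 := by
  classical
  have hdiag : b.repr (T x) i = t i * b.repr x i := by
    conv_lhs => rw [← b.sum_repr x]
    simp [-Basis.sum_repr, hT, Finsupp.single_apply, mul_comm]
  rw [hx, map_smul, Finsupp.smul_apply, smul_eq_mul] at hdiag
  exact (mul_eq_mul_right_iff.mp hdiag).resolve_left hi.symm

lemma trace_eq_repr_add_repr (b : Basis (Fin 2) F V) (X : End F V) :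
    trace F V X = b.repr (X (b 0)) 0 + b.repr (X (b 1)) 1 := by
  rw [trace_eq_matrix_trace F b, Matrix.trace_fin_two, toMatrix_apply, toMatrix_apply]

def basisWeight : Fin 2 → ℤ := ![1, -1]

lemma exists_det_eq_one_apply_basis_eq_zpow_smul (b : Basis (Fin 2) F V) {t : F} (ht : t ≠ 0) :
    ∃ T : End F V, LinearMap.det T = 1 ∧ ∀ i, T (b i) = t ^ basisWeight i • b i := by
  refine ⟨Matrix.toLin b b (Matrix.diagonal fun i => t ^ basisWeight i), ?_, fun i => ?_⟩
  · rw [det_toLin, Matrix.det_diagonal, Fin.prod_univ_two]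
    simp [basisWeight, ht]
  · simp [Matrix.toLin_self, Matrix.diagonal_apply]

lemma exists_det_eq_one_shear (b : Basis (Fin 2) F V) :
    ∃ U : End F V, LinearMap.det U = 1 ∧ U (b 0) = b 0 ∧ U (b 1) = b 0 + b 1 := by
  refine ⟨Matrix.toLin b b !![1, 1; 0, 1], ?_, ?_, ?_⟩
  · rw [det_toLin, Matrix.det_fin_two_of]
    ring
  all_goals simp [Matrix.toLin_self, Fin.sum_univ_two]

variable [CharZero F] (b : Basis (Fin 2) F V) {f : V →ₗ[F] V →ₗ[F] End F V}
  (hf : ∀ T : End F V, LinearMap.det T = 1 → ∀ u v w, f (T u) (T v) (T w) = T (f u v w))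
include hf

lemma repr_apply_basis_eq_zero_of_weight_ne {i j k l : Fin 2}
    (h : basisWeight i + basisWeight j + basisWeight k ≠ basisWeight l) :
    b.repr (f (b i) (b j) (b k)) l = 0 := by
  obtain ⟨T, hdet, hT⟩ := exists_det_eq_one_apply_basis_eq_zpow_smul b (two_ne_zero (α := F))
  refine b.repr_eq_zero_of_apply_eq_smul hT
    (μ := 2 ^ (basisWeight i + basisWeight j + basisWeight k)) ?_ fun h' => h ?_
  · rw [← hf T hdet, hT, hT, hT, zpow_add₀ two_ne_zero, zpow_add₀ two_ne_zero]
    simp only [map_smul, LinearMap.smul_apply, smul_smul]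
    ring_nf
  · have : ((2 ^ basisWeight l : ℚ) : F) =
        ((2 ^ (basisWeight i + basisWeight j + basisWeight k) : ℚ) : F) := by
      push_cast
      exact h'
    exact (zpow_right_injective₀ (by norm_num) (by norm_num) (Rat.cast_injective this)).symm

lemma exists_apply_basis_eq_smul_sMap {ω : V →ₗ[F] V →ₗ[F] F} (hω : ω.IsAlt)
    (hb : ω (b 0) (b 1) = 1) (hf_sl : ∀ u v, trace F V (f u v) = 0) :
    ∃ c : F, ∀ i j k, f (b i) (b j) (b k) = c • sMap ω (b i) (b j) (b k) := by
  obtain ⟨a, ha⟩ : ∃ a : Fin 2 → Fin 2 → Fin 2 → Fin 2 → F,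
      ∀ i j k l, b.repr (f (b i) (b j) (b k)) l = a i j k l := ⟨_, fun _ _ _ _ => rfl⟩
  have hzero : ∀ i j k l, basisWeight i + basisWeight j + basisWeight k ≠ basisWeight l →
      a i j k l = 0 := fun i j k l h => ha i j k l ▸ repr_apply_basis_eq_zero_of_weight_ne b hf h
  have htrace : ∀ i j, a i j 0 0 + a i j 1 1 = 0 := fun i j => by
    rw [← hf_sl (b i) (b j), trace_eq_repr_add_repr b, ha, ha]
  obtain ⟨U, hU, hU0, hU1⟩ := exists_det_eq_one_shear b
  have hshear : ∀ i j k, b.repr (f (U (b i)) (U (b j)) (U (b k))) 0 = a i j k 0 + a i j k 1 := by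
    intro i j k
    rw [hf U hU]
    conv_lhs => rw [← b.sum_repr (f (b i) (b j) (b k)), Fin.sum_univ_two]
    simp [hU0, hU1, ha]
  have h₁ := hshear 0 1 1
  have h₂ := hshear 1 0 1
  have h₃ := hshear 1 1 0
  simp (disch := decide) only [hU0, hU1, map_add, LinearMap.add_apply, Finsupp.add_apply, ha,
    hzero, zero_add, add_zero] at h₁ h₂ h₃
  have v₁ : a 0 0 1 0 = -2 * a 0 1 0 0 := by linear_combination h₁ + htrace 0 1
  have v₂ : a 1 0 0 0 = a 0 1 0 0 := by
    linear_combination (h₂ - h₁ + htrace 1 0 - htrace 0 1) / 2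
  have v₃ : a 0 1 1 1 = -a 0 1 0 0 := by linear_combination htrace 0 1
  have v₄ : a 1 0 1 1 = -a 0 1 0 0 := by linear_combination htrace 1 0 - v₂
  have v₅ : a 1 1 0 1 = 2 * a 0 1 0 0 := by linear_combination -h₃ + v₂
  refine ⟨2 * a 0 1 0 0, fun i j k => b.ext_elem fun l => ?_⟩
  fin_cases i <;> fin_cases j <;> fin_cases k <;> fin_cases l <;>
    simp (disch := decide) [ha, hzero, hb, hω.self_eq_zero, ← hω.neg, v₁, v₂, v₃, v₄, v₅] <;>
    ring

end Basis

theorem equivariant_map_to_sl_is_multiple_of_sMap_general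
    {F V : Type*} [Field F] [CharZero F]
    [AddCommGroup V] [Module F V] (hdim : Module.finrank F V = 2)
    (ω : V →ₗ[F] V →ₗ[F] F) (hω_alt : ∀ v, ω v v = 0) (hω_ne : ω ≠ 0)
    (f : V →ₗ[F] V →ₗ[F] Module.End F V)
    (hf_sl : ∀ u v : V, LinearMap.trace F V (f u v) = 0)
    (hf : ∀ g : V ≃ₗ[F] V, LinearMap.det (g : V →ₗ[F] V) = 1 →
      ∀ u v : V, f (g u) (g v) = g.toLinearMap ∘ₗ f u v ∘ₗ g.symm.toLinearMap) :
    (∀ u v : V, LinearMap.trace F V (sMap ω u v) = 0) ∧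
      ∃ c : F, ∀ u v : V, f u v = c • sMap ω u v := by
  have : FiniteDimensional F V := .of_finrank_eq_succ hdim
  have hω : ω.IsAlt := hω_alt
  refine ⟨trace_sMap hω, ?_⟩
  obtain ⟨b, hb⟩ := hω.exists_basis_apply_eq_one hdim hω_ne
  obtain ⟨c, hc⟩ := exists_apply_basis_eq_smul_sMap b
    (fun T hT => apply_apply_apply_of_det_eq_one hf hT) hω hb hf_sl
  have hfc : f = c • sMapBilin ω :=
    ext_basis b b fun i j => b.ext fun k => by simpa using hc i j k
  exact ⟨c, fun u v => by rw [hfc]; rfl⟩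

/-- Each `s_{u,v}` has trace zero, and any `SL(V)`-equivariant bilinear map
`V × V → 𝔰𝔩(V)`, for a `2`-dimensional vector space `V` over an algebraically closed
field of characteristic zero, is a scalar multiple of `(u, v) ↦ s_{u,v}`. -/
theorem equivariant_map_to_sl_is_multiple_of_sMap
    {F V : Type*} [Field F] [IsAlgClosed F] [CharZero F]
    [AddCommGroup V] [Module F V] (hdim : Module.finrank F V = 2)
    (ω : V →ₗ[F] V →ₗ[F] F) (hω_alt : ∀ v, ω v v = 0) (hω_ne : ω ≠ 0)
    (f : V →ₗ[F] V →ₗ[F] Module.End F V)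
    (hf_sl : ∀ u v : V, LinearMap.trace F V (f u v) = 0)
    (hf : ∀ g : V ≃ₗ[F] V, LinearMap.det (g : V →ₗ[F] V) = 1 →
      ∀ u v : V, f (g u) (g v) = g.toLinearMap ∘ₗ f u v ∘ₗ g.symm.toLinearMap) :
    (∀ u v : V, LinearMap.trace F V (sMap ω u v) = 0) ∧
      ∃ c : F, ∀ u v : V, f u v = c • sMap ω u v :=
  equivariant_map_to_sl_is_multiple_of_sMap_general hdim ω hω_alt hω_ne f hf_sl hf
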